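/- arXiv:1103.1648 — 4 statements merged into one kernel-verified Lean document; each statement's English description precedes it below -/
import Mathlib

section
/- Let (G,Y) be a harmonic group action on a finite graph Y with connected quotient G\Y. If the quotient morphism φ_G : Y → G\Y is degenerate at some vertex, then G\Y is the point graph (a single vertex with no edges). -/
/-!
Degeneracy at `y` says that every neighbour of `y` lies in the orbit `G • y`. Since `G` acts
by graph automorphisms, the same holds at every vertex of that orbit, so the orbit is closed
under adjacency as well as under orbit identification; connectivity of `G\Y` then forces it
to be all of `Y`.
-/

open MulAction

/-- A finite multigraph without loop edges: an edge set with an incidence map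
to unordered pairs of vertices, no edge being a loop. -/
structure Multigraph (V : Type*) (E : Type*) where
  ends : E → Sym2 V
  loopless : ∀ e, ¬ (ends e).IsDiag

namespace Multigraph

variable {V E : Type*}

/-- two vertices are joined by an edge -/
def Step (Γ : Multigraph V E) (a b : V) : Prop := ∃ e, Γ.ends e = s(a, b)

/-- graph-theoretic reachability (path-connectivity) -/
def Reach (Γ : Multigraph V E) : V → V → Prop := Relation.ReflTransGen Γ.Step

/-- connectivity of a graph -/
def Connected (Γ : Multigraph V E) : Prop := ∀ a b : V, Γ.Reach a b

/-- reachability using only edges in a subset `T` -/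
def ReachIn (Γ : Multigraph V E) (T : Set E) : V → V → Prop :=
  Relation.ReflTransGen (fun a b => ∃ e ∈ T, Γ.ends e = s(a, b))

/-- `T` is a spanning tree: it connects all vertices and has `|V| - 1` edges -/
def IsSpanningTree (Γ : Multigraph V E) (T : Set E) : Prop :=
  (∀ a b : V, Γ.ReachIn T a b) ∧ Nat.card T + 1 = Nat.card V

end Multigraph

open Multigraph

theorem Sym2.isDiag_map_iff' {α β : Type*} {f : α → β} (hf : Function.Injective f)
    (z : Sym2 α) : (z.map f).IsDiag ↔ z.IsDiag := by
  induction z using Sym2.ind with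
  | _ a b => simp [hf.eq_iff]

/-- A morphism of graphs: vertices map to vertices; an edge maps either to an
edge whose ends are the images of its ends, or (if the two ends have the same
image) it is vertical, collapsing to that image vertex. -/
structure GraphHom {VY EY VX EX : Type*} (ΓY : Multigraph VY EY)
    (ΓX : Multigraph VX EX) where
  fV : VY → VX
  fE : EY → EX ⊕ VX
  map_edge : ∀ e eX, fE e = Sum.inl eX → ΓX.ends eX = (ΓY.ends e).map fV
  map_vert : ∀ e v, fE e = Sum.inr v → (ΓY.ends e).map fV = Sym2.diag v

/-- An isomorphism of multigraphs: bijections on vertices and edges preserving incidence. -/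
structure GraphIso {V1 E1 V2 E2 : Type*} (Γ1 : Multigraph V1 E1)
    (Γ2 : Multigraph V2 E2) where
  vEquiv : V1 ≃ V2
  eEquiv : E1 ≃ E2
  map_ends : ∀ e, Γ2.ends (eEquiv e) = (Γ1.ends e).map vEquiv

/-- the morphism `φ` is harmonic: for every vertex `y`, the number of edges at `y`
lying over `e'` is independent of the edge `e'` incident to `φ(y)`. -/
def GraphHomHarmonic {VY EY VX EX : Type*} {ΓY : Multigraph VY EY}
    {ΓX : Multigraph VX EX} (f : GraphHom ΓY ΓX) : Prop :=
  ∀ (y : VY) (e1 e2 : EX), f.fV y ∈ ΓX.ends e1 → f.fV y ∈ ΓX.ends e2 →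
    Nat.card {e : EY // y ∈ ΓY.ends e ∧ f.fE e = Sum.inl e1} =
    Nat.card {e : EY // y ∈ ΓY.ends e ∧ f.fE e = Sum.inl e2}

/-- the morphism `φ` is degenerate at `y`: the whole neighborhood `y(1)` is
collapsed to the vertex `φ(y)`. -/
def DegenerateAt {VY EY VX EX : Type*} {ΓY : Multigraph VY EY}
    {ΓX : Multigraph VX EX} (f : GraphHom ΓY ΓX) (y : VY) : Prop :=
  ∀ e : EY, y ∈ ΓY.ends e → f.fE e = Sum.inr (f.fV y)

section GroupAction

variable (G : Type*) [Group G] {V E : Type*} [MulAction G V] [MulAction G E]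

/-- the `G`-actions on vertices and edges are compatible with the incidence structure -/
def ActsOn (Γ : Multigraph V E) : Prop :=
  ∀ (g : G) (e : E), Γ.ends (g • e) = (Γ.ends e).map (g • ·)

/-- the action is faithful: the stabilizer of each connected component acts
faithfully on that component -/
def FaithfulOnComponents (Γ : Multigraph V E) : Prop :=
  ∀ (v : V) (g : G), Γ.Reach v (g • v) →
    (∀ w, Γ.Reach v w → g • w = w) →
    (∀ e : E, (∀ u ∈ Γ.ends e, Γ.Reach v u) → g • e = e) → g = 1

/-- harmonicity of the quotient morphism `φ_H : Y → H\Y`, expressed intrinsically: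
for every vertex `y` and all non-vertical edge-orbits `H•e₁`, `H•e₂` incident to
the image vertex `H•y`, the numbers of edges at `y` lying over them agree. -/
def QuotHarmonic (Γ : Multigraph V E) (H : Subgroup G) : Prop :=
  ∀ (y : V) (e1 e2 : E),
    ¬ ((Γ.ends e1).map (Quotient.mk (orbitRel H V))).IsDiag →
    ¬ ((Γ.ends e2).map (Quotient.mk (orbitRel H V))).IsDiag →
    (∃ h : H, y ∈ Γ.ends (h • e1)) → (∃ h : H, y ∈ Γ.ends (h • e2)) →
    Nat.card {e : E // e ∈ orbit H e1 ∧ y ∈ Γ.ends e} =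
    Nat.card {e : E // e ∈ orbit H e2 ∧ y ∈ Γ.ends e}

/-- `(G,Y)` is a harmonic group action: for every subgroup `H ≤ G` the quotient
morphism `Y → H\Y` is harmonic. -/
def HarmonicAction (Γ : Multigraph V E) : Prop :=
  ∀ H : Subgroup G, QuotHarmonic G Γ H

/-- the criterion: each vertex stabilizer acts freely on the incident edges -/
def HarmonicCrit (Γ : Multigraph V E) : Prop :=
  ∀ (g : G) (v : V) (e : E), g • v = v → v ∈ Γ.ends e → g • e = e → g = 1

end GroupAction

/-- A harmonic `G`-cover of `X`: a harmonic group action `(G,Y)` with `Y`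
connected, together with a morphism `f : Y → X` realizing an isomorphism
`G\Y ≅ X`. -/
structure IsHarmonicGCover (G : Type*) [Group G] {VY EY VX EX : Type*}
    [MulAction G VY] [MulAction G EY] (ΓY : Multigraph VY EY)
    (ΓX : Multigraph VX EX) (f : GraphHom ΓY ΓX) : Prop where
  compat : ActsOn G ΓY
  harmonic : HarmonicCrit G ΓY
  connY : ΓY.Connected
  fV_equivariant : ∀ (g : G) (v : VY), f.fV (g • v) = f.fV v
  fE_equivariant : ∀ (g : G) (e : EY), f.fE (g • e) = f.fE e
  fV_orbit : ∀ v w : VY, f.fV v = f.fV w → w ∈ orbit G v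
  fE_orbit : ∀ (e e' : EY) (eX : EX), f.fE e = Sum.inl eX → f.fE e' = Sum.inl eX →
    e' ∈ orbit G e
  fV_surj : Function.Surjective f.fV
  fE_surj : ∀ eX : EX, ∃ e : EY, f.fE e = Sum.inl eX

/-- The decomposition group at `w`: elements of `G` stabilizing the connected
component of `w` inside the fiber over `f(w)`. -/
def Decomp (G : Type*) [Group G] {VY EY VX EX : Type*} [MulAction G VY]
    (ΓY : Multigraph VY EY) {ΓX : Multigraph VX EX} (f : GraphHom ΓY ΓX)
    (w : VY) : Set G :=
  {g : G | Relation.ReflTransGen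
    (fun a b => f.fV a = f.fV w ∧ f.fV b = f.fV w ∧ ∃ e, ΓY.ends e = s(a, b))
    w (g • w)}

section Cayley

variable {G : Type*} [Group G] {ι : Type*}

/-- identification of the two directed copies of a non-involution edge in a Cayley graph -/
def cayRel (s : ι → G) (inv : ι → ι) : G × ι → G × ι → Prop :=
  fun p q => s p.2 ≠ (s p.2)⁻¹ ∧ q = (p.1 * s p.2, inv p.2)

/-- the edge set of the Cayley graph `Cay(G,S)` -/
def CayE (s : ι → G) (inv : ι → ι) : Type _ := Quot (cayRel s inv)

/-- the Cayley graph `Cay(G,S)` of a group `G` with respect to a symmetric multiset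
`S`, presented as an indexed family `s : ι → G` together with an inversion pairing
`inv` on the index set.  For each `g` and `i` there is an edge from `g` to `g * s i`;
the edges for `(g, i)` and `(g * s i, inv i)` are identified when `s i` is not an
involution; involutions yield doubled edges. -/
def Cay (s : ι → G) (inv : ι → ι) (hinv : ∀ i, s (inv i) = (s i)⁻¹)
    (hne : ∀ i, s i ≠ 1) : Multigraph G (CayE s inv) where
  ends := Quot.lift (fun p => s(p.1, p.1 * s p.2)) (by
    rintro p q ⟨-, rfl⟩
    dsimp only
    rw [hinv, mul_inv_cancel_right]
    exact Sym2.eq_swap)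
  loopless := by
    intro e
    induction e using Quot.ind with
    | _ p =>
      show ¬ (s(p.1, p.1 * s p.2)).IsDiag
      simp only [Sym2.mk_isDiag_iff]
      intro h
      exact hne p.2 (by rwa [left_eq_mul] at h)

instance instCayAction (s : ι → G) (inv : ι → ι) : MulAction G (CayE s inv) where
  smul g := Quot.map (fun p => (g * p.1, p.2))
    (by rintro p q ⟨hi, rfl⟩; exact ⟨hi, by simp [mul_assoc]⟩)
  one_smul e := by
    induction e using Quot.ind with
    | _ p =>
      show Quot.mk _ ((1 : G) * p.1, p.2) = Quot.mk _ p
      rw [one_mul]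
  mul_smul g h e := by
    induction e using Quot.ind with
    | _ p =>
      show Quot.mk _ (g * h * p.1, p.2) = Quot.mk _ (g * (h * p.1), p.2)
      rw [mul_assoc]

end Cayley

section

variable {G V E : Type*} [Group G] [MulAction G V] [MulAction G E] {Γ : Multigraph V E}

theorem ActsOn.step_smul (hΓ : ActsOn G Γ) (g : G) {a b : V} (h : Γ.Step a b) :
    Γ.Step (g • a) (g • b) := by
  obtain ⟨e, he⟩ := h
  exact ⟨g • e, by rw [hΓ, he, Sym2.map_mk]⟩

theorem ActsOn.mem_orbit_of_step (hΓ : ActsOn G Γ) {y a b : V}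
    (hdeg : ∀ e : E, y ∈ Γ.ends e → ∀ u ∈ Γ.ends e, u ∈ orbit G y)
    (ha : a ∈ orbit G y) (hab : Γ.Step a b) : b ∈ orbit G y := by
  obtain ⟨g, rfl⟩ := ha
  obtain ⟨e, he⟩ := hΓ.step_smul g⁻¹ hab
  rw [inv_smul_smul] at he
  have hb : g⁻¹ • b ∈ orbit G y :=
    hdeg e (he ▸ Sym2.mem_mk_left _ _) _ (he ▸ Sym2.mem_mk_right _ _)
  simpa using mem_orbit_of_mem_orbit g hb

theorem ActsOn.mem_orbit_of_reflTransGen (hΓ : ActsOn G Γ) {y v : V}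
    (hdeg : ∀ e : E, y ∈ Γ.ends e → ∀ u ∈ Γ.ends e, u ∈ orbit G y)
    (hv : Relation.ReflTransGen (fun a b => Γ.Step a b ∨ a ∈ orbit G b) y v) :
    v ∈ orbit G y := by
  induction hv with
  | refl => exact mem_orbit_self y
  | tail _ hbc ih =>
    rcases hbc with hstep | horbit
    · exact hΓ.mem_orbit_of_step hdeg ih hstep
    · exact orbit_eq_iff.1 ((orbit_eq_iff.2 horbit).symm.trans (orbit_eq_iff.2 ih))

end

theorem harmonic_degenerate_quotient_point_general
    {V E G : Type} [Group G]
    [MulAction G V] [MulAction G E] (Γ : Multigraph V E)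
    (hcompat : ActsOn G Γ)
    -- the quotient graph `G\Y` is connected: any two vertices of `Y` are joined by a
    -- chain of edges and orbit-identifications
    (hqconn : ∀ v w : V,
      Relation.ReflTransGen (fun a b => Γ.Step a b ∨ a ∈ orbit G b) v w)
    -- the quotient morphism is degenerate at `y`: the whole neighborhood `y(1)`
    -- is collapsed to the orbit of `y`
    (y : V) (hdeg : ∀ e : E, y ∈ Γ.ends e → ∀ u ∈ Γ.ends e, u ∈ orbit G y) :
    ∀ v w : V, v ∈ orbit G w := by
  intro v w
  have hv := hcompat.mem_orbit_of_reflTransGen hdeg (hqconn y v)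
  have hw := hcompat.mem_orbit_of_reflTransGen hdeg (hqconn y w)
  exact orbit_eq_iff.1 ((orbit_eq_iff.2 hv).trans (orbit_eq_iff.2 hw).symm)

/-- If `(G,Y)` is a harmonic group action with connected quotient
`G\Y` and the quotient morphism is degenerate at some vertex `y`, then the quotient
`G\Y` is the point graph: all vertices of `Y` lie in a single `G`-orbit (and hence
the quotient, having its loops removed, has a single vertex and no edges). -/
theorem harmonic_degenerate_quotient_point
    {V E G : Type} [Fintype V] [Fintype E] [Group G] [Fintype G]
    [MulAction G V] [MulAction G E] (Γ : Multigraph V E)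
    (hcompat : ActsOn G Γ) (hfaith : FaithfulOnComponents G Γ)
    (hharm : HarmonicAction G Γ)
    -- the quotient graph `G\Y` is connected: any two vertices of `Y` are joined by a
    -- chain of edges and orbit-identifications
    (hqconn : ∀ v w : V,
      Relation.ReflTransGen (fun a b => Γ.Step a b ∨ a ∈ orbit G b) v w)
    -- the quotient morphism is degenerate at `y`: the whole neighborhood `y(1)`
    -- is collapsed to the orbit of `y`
    (y : V) (hdeg : ∀ e : E, y ∈ Γ.ends e → ∀ u ∈ Γ.ends e, u ∈ orbit G y) :
    ∀ v w : V, v ∈ orbit G w :=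
  harmonic_degenerate_quotient_point_general Γ hcompat hqconn y hdeg
end

section
/- A faithful group action (G,Y) of a finite group G on a finite graph Y is harmonic if and only if for every vertex y ∈ V(Y), the stabilizer subgroup G_y acts freely on the edge set E(y(1)) of edges incident to y. -/
open MulAction

open Multigraph

/-! If stabilizers act freely on incident edges, then for any subgroup `H` the edges of a
non-vertical orbit `H • e` at `y` are the translates `h • e` with `h ∈ H_y`, one for each
such `h`: every count in the harmonicity condition equals `|H_y|`.

Conversely, if `g` fixes a vertex `w` and an edge at `w`, harmonicity of `Y → ⟨g⟩\Y` at `w`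
compares the singleton orbit of that edge with the `⟨g⟩`-orbit of any other edge at `w`,
so `g` fixes every edge at `w`, hence also their other ends. Spreading this over the
component of `w`, `g` acts trivially on it, and faithfulness gives `g = 1`. -/

theorem not_isDiag_map_mk_ends_of_smul_eq_self {G V E : Type*} [Group G] [MulAction G V]
    {Γ : Multigraph V E} {w : V} (hw : ∀ g : G, g • w = w) {e : E}
    (he : w ∈ Γ.ends e) : ¬ ((Γ.ends e).map (Quotient.mk (orbitRel G V))).IsDiag := by
  obtain ⟨b, hb⟩ := Sym2.mem_iff_exists.mp he
  rw [hb, Sym2.map_mk, Sym2.mk_isDiag_iff]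
  intro hwb
  obtain ⟨g, hg⟩ := Quotient.exact hwb.symm
  have hbw : b = w := hg.symm.trans (hw g)
  exact Γ.loopless e (by rw [hb, hbw, Sym2.mk_isDiag_iff])

section

variable {G V E : Type*} [Group G] [MulAction G V] [MulAction G E] {Γ : Multigraph V E}

theorem ActsOn.subgroup (hΓ : ActsOn G Γ) (H : Subgroup G) : ActsOn H Γ :=
  fun h e => hΓ h e

theorem HarmonicCrit.subgroup (hfree : HarmonicCrit G Γ) (H : Subgroup G) :
    HarmonicCrit H Γ :=
  fun h v e hv hve he => Subtype.ext (hfree h v e hv hve he)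

theorem ActsOn.smul_mem_ends (hΓ : ActsOn G Γ) (g : G) {v : V} {e : E}
    (hv : v ∈ Γ.ends e) : g • v ∈ Γ.ends (g • e) := by
  rw [hΓ]
  exact Sym2.mem_map.mpr ⟨v, hv, rfl⟩

theorem ActsOn.map_mk_ends_smul (hΓ : ActsOn G Γ) (g : G) (e : E) :
    (Γ.ends (g • e)).map (Quotient.mk (orbitRel G V)) =
      (Γ.ends e).map (Quotient.mk (orbitRel G V)) := by
  rw [hΓ, Sym2.map_map]
  congr 1
  funext v
  exact Quotient.sound (mem_orbit v g)

theorem ActsOn.smul_eq_self_of_mem_ends (hΓ : ActsOn G Γ) {g : G} {y : V} {e : E}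
    (hvert : ¬ ((Γ.ends e).map (Quotient.mk (orbitRel G V))).IsDiag)
    (hy : y ∈ Γ.ends e) (hgy : y ∈ Γ.ends (g • e)) : g • y = y := by
  obtain ⟨b, hb⟩ := Sym2.mem_iff_exists.mp hy
  have hyb : y ∉ orbit G b := fun h =>
    hvert (by rw [hb, Sym2.map_mk, Sym2.mk_isDiag_iff]; exact Quotient.sound h)
  rw [hΓ, hb, Sym2.map_mk, Sym2.mem_iff] at hgy
  rcases hgy with h | h
  · exact h.symm
  · exact absurd ⟨g, h.symm⟩ hyb

theorem ActsOn.card_incident_orbit_eq_card_stabilizer (hΓ : ActsOn G Γ)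
    (hfree : HarmonicCrit G Γ) {y : V} {e : E}
    (hvert : ¬ ((Γ.ends e).map (Quotient.mk (orbitRel G V))).IsDiag)
    (hy : y ∈ Γ.ends e) :
    Nat.card {e' : E // e' ∈ orbit G e ∧ y ∈ Γ.ends e'} = Nat.card (stabilizer G y) := by
  let F : stabilizer G y → {e' : E // e' ∈ orbit G e ∧ y ∈ Γ.ends e'} := fun g =>
    ⟨(g : G) • e, mem_orbit e (g : G), by
      simpa only [mem_stabilizer_iff.mp g.2] using hΓ.smul_mem_ends (g : G) hy⟩
  have hinj : Function.Injective F := by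
    rintro ⟨g, hg⟩ ⟨g', hg'⟩ hF
    have he : g • e = g' • e := congrArg Subtype.val hF
    have hg'g : g'⁻¹ * g = 1 := by
      refine hfree _ y e ?_ hy ?_
      · rw [mul_smul, mem_stabilizer_iff.mp hg, inv_smul_eq_iff, mem_stabilizer_iff.mp hg']
      · rw [mul_smul, he, inv_smul_smul]
    exact Subtype.ext (inv_mul_eq_one.mp hg'g).symm
  have hsurj : Function.Surjective F := by
    rintro ⟨_, ⟨g, rfl⟩, hgy⟩
    exact ⟨⟨g, hΓ.smul_eq_self_of_mem_ends hvert hy hgy⟩, rfl⟩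
  exact (Nat.card_congr (Equiv.ofBijective F ⟨hinj, hsurj⟩)).symm

theorem HarmonicCrit.harmonicAction (hfree : HarmonicCrit G Γ) (hΓ : ActsOn G Γ) :
    HarmonicAction G Γ := by
  intro H y
  have hcount : ∀ e : E, ¬ ((Γ.ends e).map (Quotient.mk (orbitRel H V))).IsDiag →
      (∃ h : H, y ∈ Γ.ends (h • e)) →
      Nat.card {e' : E // e' ∈ orbit H e ∧ y ∈ Γ.ends e'} = Nat.card (stabilizer H y) := by
    rintro e hvert ⟨h, hy⟩
    rw [← orbit_smul h e]
    refine (hΓ.subgroup H).card_incident_orbit_eq_card_stabilizer (hfree.subgroup H) ?_ hy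
    rwa [(hΓ.subgroup H).map_mk_ends_smul]
  intro e₁ e₂ hvert₁ hvert₂ hy₁ hy₂
  rw [hcount e₁ hvert₁ hy₁, hcount e₂ hvert₂ hy₂]

theorem QuotHarmonic.smul_eq_self_of_mem_ends {H : Subgroup G} (hH : QuotHarmonic G Γ H)
    (hΓ : ActsOn G Γ) {w : V} (hw : ∀ h : H, h • w = w) {d : E} (hwd : w ∈ Γ.ends d)
    (hd : ∀ h : H, h • d = d) {e : E} (hwe : w ∈ Γ.ends e) (h : H) : h • e = e := by
  have hcard := hH w d e (not_isDiag_map_mk_ends_of_smul_eq_self hw hwd)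
    (not_isDiag_map_mk_ends_of_smul_eq_self hw hwe) ⟨1, by rwa [one_smul]⟩ ⟨1, by rwa [one_smul]⟩
  have hunique : Unique {c : E // c ∈ orbit H d ∧ w ∈ Γ.ends c} :=
    { default := ⟨d, mem_orbit_self d, hwd⟩
      uniq := by
        rintro ⟨_, ⟨k, rfl⟩, _⟩
        exact Subtype.ext (hd k) }
  rw [Nat.card_unique] at hcard
  have hsub := (Nat.card_eq_one_iff_unique.mp hcard.symm).1
  have hhe : w ∈ Γ.ends (h • e) := by
    simpa only [hw] using (hΓ.subgroup H).smul_mem_ends h hwe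
  exact congrArg Subtype.val (hsub.elim ⟨h • e, mem_orbit e h, hhe⟩ ⟨e, mem_orbit_self e, hwe⟩)

theorem HarmonicAction.smul_eq_self_of_mem_ends (ha : HarmonicAction G Γ) (hΓ : ActsOn G Γ)
    {g : G} {w : V} (hgw : g • w = w) {d : E} (hwd : w ∈ Γ.ends d) (hgd : g • d = d)
    {e : E} (hwe : w ∈ Γ.ends e) : g • e = e := by
  have hw : ∀ h : Subgroup.zpowers g, h • w = w := fun h =>
    mem_stabilizer_iff.mp (Subgroup.zpowers_le.mpr (mem_stabilizer_iff.mpr hgw) h.2)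
  have hd : ∀ h : Subgroup.zpowers g, h • d = d := fun h =>
    mem_stabilizer_iff.mp (Subgroup.zpowers_le.mpr (mem_stabilizer_iff.mpr hgd) h.2)
  exact (ha _).smul_eq_self_of_mem_ends hΓ hw hwd hd hwe ⟨g, Subgroup.mem_zpowers g⟩

theorem ActsOn.smul_eq_self_of_ends_eq (hΓ : ActsOn G Γ) {g : G} {e : E} (hge : g • e = e)
    {a b : V} (hab : Γ.ends e = s(a, b)) (hga : g • a = a) : g • b = b := by
  have h := hΓ g e
  rwa [hge, hab, Sym2.map_mk, hga, Sym2.congr_right, eq_comm] at h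

theorem HarmonicAction.smul_eq_self_of_reach (ha : HarmonicAction G Γ) (hΓ : ActsOn G Γ)
    {g : G} {v : V} (hgv : g • v = v) {d : E} (hvd : v ∈ Γ.ends d) (hgd : g • d = d)
    {w : V} (hw : Γ.Reach v w) : g • w = w ∧ ∀ e : E, w ∈ Γ.ends e → g • e = e := by
  induction hw with
  | refl => exact ⟨hgv, fun e he => ha.smul_eq_self_of_mem_ends hΓ hgv hvd hgd he⟩
  | tail _ hstep ih =>
    obtain ⟨e, he⟩ := hstep
    have hge : g • e = e := ih.2 e (by rw [he]; exact Sym2.mem_mk_left _ _)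
    have hgw := hΓ.smul_eq_self_of_ends_eq hge he ih.1
    exact ⟨hgw, fun e' he' =>
      ha.smul_eq_self_of_mem_ends hΓ hgw (by rw [he]; exact Sym2.mem_mk_right _ _) hge he'⟩

theorem HarmonicAction.harmonicCrit (ha : HarmonicAction G Γ) (hΓ : ActsOn G Γ)
    (hfaith : FaithfulOnComponents G Γ) : HarmonicCrit G Γ := by
  intro g v d hgv hvd hgd
  have hfix := fun {w} (hw : Γ.Reach v w) => ha.smul_eq_self_of_reach hΓ hgv hvd hgd hw
  refine hfaith v g (by rw [hgv]; exact .refl) (fun w hw => (hfix hw).1) fun e he => ?_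
  exact (hfix (he _ (Sym2.out_fst_mem _))).2 e (Sym2.out_fst_mem _)

end

theorem harmonicAction_iff_stabilizer_free_general
    {V E G : Type} [Group G]
    [MulAction G V] [MulAction G E] (Γ : Multigraph V E)
    (hcompat : ActsOn G Γ) (hfaith : FaithfulOnComponents G Γ) :
    HarmonicAction G Γ ↔ HarmonicCrit G Γ :=
  ⟨fun ha => ha.harmonicCrit hcompat hfaith, fun hfree => hfree.harmonicAction hcompat⟩

/-- A faithful group action `(G,Y)` on a finite graph is harmonic
(i.e. for every subgroup `H ≤ G` the quotient morphism `Y → H\Y` is harmonic) if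
and only if every vertex stabilizer `G_y` acts freely on the edges incident to `y`. -/
theorem harmonicAction_iff_stabilizer_free
    {V E G : Type} [Fintype V] [Fintype E] [Group G] [Fintype G]
    [MulAction G V] [MulAction G E] (Γ : Multigraph V E)
    (hcompat : ActsOn G Γ) (hfaith : FaithfulOnComponents G Γ) :
    HarmonicAction G Γ ↔ HarmonicCrit G Γ :=
  harmonicAction_iff_stabilizer_free_general Γ hcompat hfaith
end

section
/- Let f : (G,Y) → X be an unflipped harmonic G-cover, x ∈ V(X), w ∈ Y_x, and identify V(Y_x) with G/I_w via g I_w ↦ gw. If δ ∈ G satisfies δ I_w = δ^{-1} I_w (a self-inverse coset) and there is an edge e from w to δw, then δe is a distinct edge from w to δw lying in a different I_w-orbit than e; hence the multiplicity of the self-inverse double coset I_w δ I_w in the edge-labeling multiset at w is even. -/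
open MulAction

open Multigraph

/-!
An edge `e` from `w` to `g • w` is carried by `g⁻¹` to an edge from `w` to `g⁻¹ • w`, its
reversal. Reversals of `e` are unique up to the stabilizer `I` of `w` and reversal commutes
with `I`, so it descends to an involution of the set of `I`-orbits of edges at `w`. Freeness on
edges makes it fixed-point free: `i • e = g⁻¹ • e` forces `g = i⁻¹ ∈ I`, so `e` would be a loop.
When `δ • w = δ⁻¹ • w`, the double coset `IδI` is closed under inversion, so the involution
preserves the edges labeled by `IδI`, and their number of `I`-orbits is even.
-/
theorem Function.Involutive.two_dvd_card_of_forall_ne {α : Type*} [Finite α] {ψ : α → α}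
    (h : Function.Involutive ψ) (hψ : ∀ a, ψ a ≠ a) : 2 ∣ Nat.card α := by
  classical
  have := Fintype.ofFinite α
  have hsupport : (h.toPerm ψ).support = Finset.univ := by
    ext a
    simp [hψ a]
  rw [Nat.card_eq_fintype_card, ← Finset.card_univ, ← hsupport]
  exact Equiv.Perm.two_dvd_card_support (by ext a; simp [sq, h a])

section EdgeReversal

variable {G V E : Type*} [Group G] [MulAction G V] [MulAction G E] {Γ : Multigraph V E}
  {w : V}

theorem ActsOn.ends_inv_smul (hΓ : ActsOn G Γ) {g : G} {e : E}
    (he : Γ.ends e = s(w, g • w)) : Γ.ends (g⁻¹ • e) = s(w, g⁻¹ • w) := by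
  rw [hΓ, he, Sym2.map_mk, inv_smul_smul, Sym2.eq_swap]

variable (G Γ w) in
def IsReversal (e e' : E) : Prop :=
  ∃ g : G, Γ.ends e = s(w, g • w) ∧ e' = g⁻¹ • e

theorem IsReversal.symm (hΓ : ActsOn G Γ) {e e' : E} (h : IsReversal G Γ w e e') :
    IsReversal G Γ w e' e := by
  obtain ⟨g, he, rfl⟩ := h
  exact ⟨g⁻¹, hΓ.ends_inv_smul he, by rw [inv_inv, smul_inv_smul]⟩

theorem IsReversal.stabilizer_smul_left (hΓ : ActsOn G Γ) {i : G} (hi : i • w = w)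
    {e e' : E} (h : IsReversal G Γ w e e') : IsReversal G Γ w (i • e) e' := by
  obtain ⟨g, he, rfl⟩ := h
  refine ⟨i * g, ?_, by rw [mul_inv_rev, mul_smul, inv_smul_smul]⟩
  rw [hΓ, he, Sym2.map_mk, hi, mul_smul]

theorem IsReversal.exists_stabilizer_smul_eq {e e₁ e₂ : E} (h₁ : IsReversal G Γ w e e₁)
    (h₂ : IsReversal G Γ w e e₂) : ∃ i : G, i • w = w ∧ i • e₁ = e₂ := by
  obtain ⟨g₁, he₁, rfl⟩ := h₁
  obtain ⟨g₂, he₂, rfl⟩ := h₂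
  have hg : g₁ • w = g₂ • w := Sym2.congr_right.1 (he₁.symm.trans he₂)
  refine ⟨g₂⁻¹ * g₁, by rw [mul_smul, hg, inv_smul_smul], ?_⟩
  rw [mul_smul, smul_inv_smul]

/-- Freeness on edges would put the reversing element in the stabilizer of `w`,
making the edge a loop. -/
theorem IsReversal.stabilizer_smul_ne (hfree : ∀ (g : G) (e : E), g • e = e → g = 1)
    {i : G} (hi : i • w = w) {e e' : E} (h : IsReversal G Γ w e e') : i • e ≠ e' := by
  obtain ⟨g, he, rfl⟩ := h
  intro hie
  have hgi : g * i = 1 := hfree _ e (by rw [mul_smul, hie, smul_inv_smul])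
  rw [mul_eq_one_iff_eq_inv] at hgi
  apply Γ.loopless e
  rw [he, hgi, inv_smul_eq_iff.2 hi.symm]
  exact Sym2.mk_isDiag_iff.2 rfl

end EdgeReversal

theorem two_dvd_card_stabilizer_orbits_of_exists_reversal {G V E : Type*} [Group G]
    [MulAction G V] [MulAction G E] [Finite E] {Γ : Multigraph V E} (hΓ : ActsOn G Γ)
    (hfree : ∀ (g : G) (e : E), g • e = e → g = 1) (w : V) (p : E → Prop)
    (hp : ∀ e, p e → ∃ e', p e' ∧ IsReversal G Γ w e e') :
    2 ∣ Nat.card (Quot (fun e₁ e₂ : {e // p e} => ∃ i : G, i • w = w ∧ i • e₁.1 = e₂.1)) := by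
  set r := fun e₁ e₂ : {e // p e} => ∃ i : G, i • w = w ∧ i • e₁.1 = e₂.1
  have hr : Equivalence r :=
    ⟨fun _ => ⟨1, one_smul _ _, one_smul _ _⟩,
      fun ⟨i, hi, h⟩ => ⟨i⁻¹, by rw [inv_smul_eq_iff, hi], by rw [← h, inv_smul_smul]⟩,
      fun ⟨i, hi, h⟩ ⟨j, hj, h'⟩ => ⟨j * i, by rw [mul_smul, hi, hj], by rw [mul_smul, h, h']⟩⟩
  have hstab {e e₁ e₂ : {e // p e}} (h₁ : IsReversal G Γ w e.1 e₁.1)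
      (h₂ : IsReversal G Γ w e.1 e₂.1) : r e₁ e₂ := h₁.exists_stabilizer_smul_eq h₂
  choose rev hrev_mem hrev using hp
  let ψ₀ (e : {e // p e}) : {e // p e} := ⟨rev e.1 e.2, hrev_mem e.1 e.2⟩
  let ψ : Quot r → Quot r := Quot.lift (fun e => Quot.mk r (ψ₀ e)) <| by
    rintro e₁ e₂ ⟨i, hi, h⟩
    have h₂ : IsReversal G Γ w e₂.1 (ψ₀ e₁).1 := h ▸ (hrev e₁.1 e₁.2).stabilizer_smul_left hΓ hi
    exact Quot.sound (hstab h₂ (hrev e₂.1 e₂.2))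
  have hψ : Function.Involutive ψ := by
    rintro ⟨e⟩
    exact Quot.sound (hstab (hrev _ (ψ₀ e).2) ((hrev e.1 e.2).symm hΓ))
  refine hψ.two_dvd_card_of_forall_ne ?_
  rintro ⟨e⟩ h
  obtain ⟨i, hi, hie⟩ := hr.symm (hr.eqvGen_iff.1 (Quot.eqvGen_exact h))
  exact (hrev e.1 e.2).stabilizer_smul_ne hfree hi hie

theorem self_inverse_coset_even_multiplicity_general
    {G VY EY VX EX : Type} [Group G] [Fintype EY] [MulAction G VY] [MulAction G EY]
    (ΓY : Multigraph VY EY) (ΓX : Multigraph VX EX) (f : GraphHom ΓY ΓX)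
    (hcov : IsHarmonicGCover G ΓY ΓX f)
    (hunflip : ∀ (g : G) (e : EY), g • e = e → g = 1)
    (w : VY)
    (δ : G) (hself : δ • w = δ⁻¹ • w)
    (e : EY) (he : ΓY.ends e = s(w, δ • w)) :
    δ • e ≠ e ∧
    ΓY.ends (δ • e) = s(w, δ • w) ∧
    (∀ i : G, i • w = w → i • e ≠ δ • e) ∧
    2 ∣ Nat.card (Quot (fun e1 e2 : {e' : EY // ∃ a, a • w = w ∧ ∃ b, b • w = w ∧
        ΓY.ends e' = s(w, (a * δ * b) • w)} => ∃ i : G, i • w = w ∧ i • e1.1 = e2.1)) := by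
  have he' : ΓY.ends e = s(w, δ⁻¹ • w) := hself ▸ he
  have hrev : IsReversal G ΓY w e (δ • e) := ⟨δ⁻¹, he', by rw [inv_inv]⟩
  have hdiff (i : G) (hi : i • w = w) : i • e ≠ δ • e := hrev.stabilizer_smul_ne hunflip hi
  refine ⟨fun h => hdiff 1 (one_smul _ _) (by rw [h, one_smul]),
    by simpa using hcov.compat.ends_inv_smul he', hdiff, ?_⟩
  refine two_dvd_card_stabilizer_orbits_of_exists_reversal hcov.compat hunflip w _ ?_
  rintro e' ⟨a, ha, b, hb, hends⟩
  refine ⟨_, ⟨b⁻¹, inv_smul_eq_iff.2 hb.symm, 1, one_smul _ _, ?_⟩, a * δ * b, hends, rfl⟩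
  rw [hcov.compat.ends_inv_smul hends, mul_inv_rev, mul_inv_rev, mul_smul, mul_smul,
    inv_smul_eq_iff.2 ha.symm, ← hself, mul_one, mul_smul]

/-- Let `f : (G,Y) → X` be an *unflipped* harmonic `G`-cover,
`w` in the fiber over `x` with inertia `I = I_w`.  Suppose `δ ∈ G` represents a
self-inverse coset, `δI = δ⁻¹I` (i.e. `δ•w = δ⁻¹•w`), and `e` is an edge from `w`
to `δ•w`.  Then `δ•e` is an edge from `w` to `δ•w` distinct from `e` and lying in
a different `I`-orbit; consequently the number of `I`-orbits of edges at `w`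
labeled by the self-inverse double coset `IδI` is even. -/
theorem self_inverse_coset_even_multiplicity
    {G VY EY VX EX : Type} [Group G] [Fintype G] [Fintype VY] [Fintype EY]
    [Fintype VX] [Fintype EX] [MulAction G VY] [MulAction G EY]
    (ΓY : Multigraph VY EY) (ΓX : Multigraph VX EX) (f : GraphHom ΓY ΓX)
    (hcov : IsHarmonicGCover G ΓY ΓX f)
    (hunflip : ∀ (g : G) (e : EY), g • e = e → g = 1)
    (x : VX) (w : VY) (hw : f.fV w = x)
    (δ : G) (hself : δ • w = δ⁻¹ • w)
    (e : EY) (he : ΓY.ends e = s(w, δ • w)) :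
    δ • e ≠ e ∧
    ΓY.ends (δ • e) = s(w, δ • w) ∧
    (∀ i : G, i • w = w → i • e ≠ δ • e) ∧
    2 ∣ Nat.card (Quot (fun e1 e2 : {e' : EY // ∃ a, a • w = w ∧ ∃ b, b • w = w ∧
        ΓY.ends e' = s(w, (a * δ * b) • w)} => ∃ i : G, i • w = w ∧ i • e1.1 = e2.1)) :=
  self_inverse_coset_even_multiplicity_general ΓY ΓX f hcov hunflip w δ hself e he
end

section
/- Let X be a finite connected graph of genus g (first Betti number), T ⊆ X a spanning tree, and G a finite group. Suppose elements γ₁,…,γ_g ∈ G are assigned to the g edges of X not in T, and each vertex z of X is assigned a finite symmetric multiset S_z of nontrivial elements of G. If G is generated by {γ₁,…,γ_g} together with ∪_z S_z, then the associated graph Y — with vertex set G × V(X), horizontal edges (g,z)—(g,z') for tree edges zz' ∈ T, edges (g,z)—(gγ_i, z') for each non-tree edge zz' with label γ_i, and vertical fiber edges making each fiber G×{z} into Cay(G,S_z) — is connected, and the left G-action on the first coordinate is a harmonic action with quotient isomorphic to X and trivial vertex stabilizers (an étale G-cover). -/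
open MulAction

open Multigraph

namespace Stmt19

variable {G VX EX : Type} [Group G] {ι : VX → Type}

/-- vertices of the cover: `G × V(X)` -/
structure CovV (G VX : Type) where
  g : G
  base : VX

/-- horizontal edges of the cover: `G × E(X)` -/
structure CovHE (G EX : Type) where
  g : G
  edge : EX

instance : MulAction G (CovV G VX) where
  smul a p := ⟨a * p.g, p.base⟩
  one_smul p := by
    show (⟨1 * p.g, p.base⟩ : CovV G VX) = p
    rw [one_mul]
  mul_smul a b p := by
    show (⟨a * b * p.g, p.base⟩ : CovV G VX) = ⟨a * (b * p.g), p.base⟩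
    rw [mul_assoc]

instance : MulAction G (CovHE G EX) where
  smul a p := ⟨a * p.g, p.edge⟩
  one_smul p := by
    show (⟨1 * p.g, p.edge⟩ : CovHE G EX) = p
    rw [one_mul]
  mul_smul a b p := by
    show (⟨a * b * p.g, p.edge⟩ : CovHE G EX) = ⟨a * (b * p.g), p.edge⟩
    rw [mul_assoc]

instance sigmaMulAction (sf : ∀ z : VX, ι z → G) (invf : ∀ z : VX, ι z → ι z) :
    MulAction G (Σ z : VX, CayE (sf z) (invf z)) where
  smul a p := ⟨p.1, a • p.2⟩
  one_smul p := by
    show (⟨p.1, (1 : G) • p.2⟩ : Σ z : VX, CayE (sf z) (invf z)) = p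
    rw [one_smul]
  mul_smul a b p := by
    show (⟨p.1, (a * b) • p.2⟩ : Σ z : VX, CayE (sf z) (invf z))
        = ⟨p.1, a • (b • p.2)⟩
    rw [mul_smul]

instance sumMulAction {α β : Type} [MulAction G α] [MulAction G β] :
    MulAction G (α ⊕ β) where
  smul a := Sum.map (a • ·) (a • ·)
  one_smul p := by cases p <;> simp [Sum.map]
  mul_smul a b p := by cases p <;> simp [Sum.map, mul_smul]

/-- The Grunwald–Wang cover graph: vertex set `G × V(X)`; a horizontal edge
`(g,e)` joins `(g, src e)` to `(g·γ(e), tgt e)` (so tree edges, where `γ = 1`,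
stay within one copy of `X`, and a non-tree edge twists by its monodromy label);
the fiber over each vertex `z` is the Cayley graph `Cay(G, S_z)`. -/
def gwGraph (ΓX : Multigraph VX EX) (o : EX → VX × VX)
    (hor : ∀ e, ΓX.ends e = s((o e).1, (o e).2))
    (γ : EX → G) (sf : ∀ z : VX, ι z → G) (invf : ∀ z : VX, ι z → ι z)
    (hinvf : ∀ z i, sf z (invf z i) = (sf z i)⁻¹)
    (hnef : ∀ z i, sf z i ≠ 1) :
    Multigraph (CovV G VX) (CovHE G EX ⊕ Σ z : VX, CayE (sf z) (invf z)) where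
  ends := fun e =>
    match e with
    | Sum.inl h => s((⟨h.g, (o h.edge).1⟩ : CovV G VX),
        (⟨h.g * γ h.edge, (o h.edge).2⟩ : CovV G VX))
    | Sum.inr c =>
        ((Cay (sf c.1) (invf c.1) (hinvf c.1) (hnef c.1)).ends c.2).map
          (fun a => ⟨a, c.1⟩)
  loopless := by
    rintro (h | c)
    · intro hd
      apply ΓX.loopless h.edge
      rw [hor h.edge, Sym2.mk_isDiag_iff]
      exact congrArg CovV.base (Sym2.mk_isDiag_iff.mp hd)
    · intro hd
      exact (Cay (sf c.1) (invf c.1) (hinvf c.1) (hnef c.1)).loopless c.2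
        ((Sym2.isDiag_map_iff' (f := fun a => (⟨a, c.1⟩ : CovV G VX))
          (fun a b hab => congrArg CovV.g hab) _).mp hd)

end Stmt19

/-! Since `G` acts on the cover `Y` by graph automorphisms, the `g` for which `(1, z₀)` and
`(g, z₀)` lie in one component form a subgroup of `G`, so it suffices to reach `(s, z₀)` for
each generator `s`; every vertex `(g, z)` is then reached along the lift of a tree path to
the sheet `G × {g}`, whose edges have label `1`. -/

namespace Multigraph

variable {V E : Type*} {Γ : Multigraph V E}

theorem Step.symm {a b : V} (h : Γ.Step a b) : Γ.Step b a :=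
  let ⟨e, he⟩ := h
  ⟨e, he.trans Sym2.eq_swap⟩

theorem Reach.symm {a b : V} (h : Γ.Reach a b) : Γ.Reach b a :=
  Relation.ReflTransGen.mono (fun _ _ => Step.symm) _ _ (Relation.reflTransGen_swap.mpr h)

variable {G : Type*} [Group G] [MulAction G V] [MulAction G E]

theorem Reach.smul (hΓ : ActsOn G Γ) (g : G) {a b : V} (h : Γ.Reach a b) :
    Γ.Reach (g • a) (g • b) :=
  h.lift (g • ·) fun _ _ ⟨e, he⟩ => ⟨g • e, by rw [hΓ, he, Sym2.map_mk]⟩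

def componentStabilizer (hΓ : ActsOn G Γ) (v : V) : Subgroup G where
  carrier := {g | Γ.Reach v (g • v)}
  one_mem' := by rw [Set.mem_ofPred_eq, one_smul]; exact .refl
  mul_mem' {a b} ha hb := by
    rw [Set.mem_ofPred_eq, mul_smul]
    exact ha.trans (hb.smul hΓ a)
  inv_mem' {a} ha := by
    simpa only [Set.mem_ofPred_eq, inv_smul_smul] using (ha.smul hΓ a⁻¹).symm

theorem connected_of_closure_eq_top (hΓ : ActsOn G Γ) {S : Set G}
    (hS : Subgroup.closure S = ⊤) (v : V) (hSv : ∀ s ∈ S, Γ.Reach v (s • v))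
    (horbit : ∀ w, ∃ g : G, Γ.Reach (g • v) w) : Γ.Connected := by
  have hstab : componentStabilizer hΓ v = ⊤ :=
    top_le_iff.mp (hS ▸ (Subgroup.closure_le _).mpr hSv)
  have hreach (w : V) : Γ.Reach v w := by
    obtain ⟨g, hg⟩ := horbit w
    have hv : Γ.Reach v (g • v) := (hstab ▸ Subgroup.mem_top g : g ∈ componentStabilizer hΓ v)
    exact hv.trans hg
  exact fun a b => (hreach a).symm.trans (hreach b)

end Multigraph

namespace Stmt19

variable {G VX EX : Type} [Group G] {ι : VX → Type}

@[simp] theorem CovV.smul_mk (a b : G) (z : VX) : a • (⟨b, z⟩ : CovV G VX) = ⟨a * b, z⟩ :=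
  rfl

@[simp] theorem CovHE.smul_mk (a b : G) (e : EX) : a • (⟨b, e⟩ : CovHE G EX) = ⟨a * b, e⟩ :=
  rfl

theorem CovV.eq_one_of_smul_eq {g : G} {p : CovV G VX} (h : g • p = p) : g = 1 :=
  mul_eq_right.mp (congrArg CovV.g h)

theorem CovV.mem_orbit_iff {p q : CovV G VX} : q ∈ orbit G p ↔ p.base = q.base := by
  refine ⟨fun ⟨_, hg⟩ => hg ▸ rfl, fun h => ⟨q.g * p.g⁻¹, ?_⟩⟩
  cases p; cases q
  simp_all

theorem CovHE.mem_orbit_iff {h h' : CovHE G EX} : h' ∈ orbit G h ↔ h.edge = h'.edge := by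
  refine ⟨fun ⟨_, hg⟩ => hg ▸ rfl, fun he => ⟨h'.g * h.g⁻¹, ?_⟩⟩
  cases h; cases h'
  simp_all

theorem inl_mem_orbit_inl_iff {α β : Type*} [MulAction G α] [MulAction G β] {a a' : α} :
    (Sum.inl a' : α ⊕ β) ∈ orbit G (Sum.inl a) ↔ a' ∈ orbit G a :=
  ⟨fun ⟨g, hg⟩ => ⟨g, Sum.inl_injective hg⟩, fun ⟨g, hg⟩ => ⟨g, congrArg Sum.inl hg⟩⟩

section gwGraph

variable {ΓX : Multigraph VX EX} {o : EX → VX × VX} {hor : ∀ e, ΓX.ends e = s((o e).1, (o e).2)}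
  {γ : EX → G} {sf : ∀ z : VX, ι z → G} {invf : ∀ z : VX, ι z → ι z}
  {hinvf : ∀ z i, sf z (invf z i) = (sf z i)⁻¹} {hnef : ∀ z i, sf z i ≠ 1}

theorem gwGraph_ends_inl (h : CovHE G EX) :
    (gwGraph ΓX o hor γ sf invf hinvf hnef).ends (Sum.inl h) =
      s(⟨h.g, (o h.edge).1⟩, ⟨h.g * γ h.edge, (o h.edge).2⟩) :=
  rfl

theorem gwGraph_ends_inr (z : VX) (p : G × ι z) :
    (gwGraph ΓX o hor γ sf invf hinvf hnef).ends (Sum.inr ⟨z, Quot.mk _ p⟩) =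
      s(⟨p.1, z⟩, ⟨p.1 * sf z p.2, z⟩) :=
  Sym2.map_mk _ _ _

theorem gwGraph_actsOn : ActsOn G (gwGraph ΓX o hor γ sf invf hinvf hnef) := by
  rintro a (⟨g, e⟩ | ⟨z, c⟩)
  · exact (gwGraph_ends_inl _).trans (by simp [gwGraph_ends_inl, mul_assoc])
  · induction c using Quot.ind with
    | _ p =>
      exact (gwGraph_ends_inr z (a * p.1, p.2)).trans
        (by simp [gwGraph_ends_inr, mul_assoc])

theorem gwGraph_step_inl (g : G) (e : EX) :
    (gwGraph ΓX o hor γ sf invf hinvf hnef).Step ⟨g, (o e).1⟩ ⟨g * γ e, (o e).2⟩ :=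
  ⟨Sum.inl ⟨g, e⟩, rfl⟩

theorem gwGraph_step_inr (g : G) (z : VX) (i : ι z) :
    (gwGraph ΓX o hor γ sf invf hinvf hnef).Step ⟨g, z⟩ ⟨g * sf z i, z⟩ :=
  ⟨Sum.inr ⟨z, Quot.mk _ (g, i)⟩, gwGraph_ends_inr z (g, i)⟩

theorem gwGraph_reach_of_reachIn {T : Set EX} (hγT : ∀ e ∈ T, γ e = 1) (g : G) {a b : VX}
    (h : ΓX.ReachIn T a b) : (gwGraph ΓX o hor γ sf invf hinvf hnef).Reach ⟨g, a⟩ ⟨g, b⟩ := by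
  induction h with
  | refl => exact .refl
  | tail _ hstep ih =>
    obtain ⟨e, heT, he⟩ := hstep
    have hlift : (gwGraph ΓX o hor γ sf invf hinvf hnef).Step ⟨g, (o e).1⟩ ⟨g, (o e).2⟩ := by
      convert gwGraph_step_inl g e
      rw [hγT e heT, mul_one]
    rcases Sym2.eq_iff.mp ((hor e).symm.trans he) with ⟨h1, h2⟩ | ⟨h1, h2⟩
    · exact ih.tail (h1 ▸ h2 ▸ hlift)
    · exact ih.tail (h1 ▸ h2 ▸ hlift.symm)

end gwGraph

theorem gw_cover_connected_etale_general
    (ΓX : Multigraph VX EX)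
    (o : EX → VX × VX) (hor : ∀ e, ΓX.ends e = s((o e).1, (o e).2))
    (T : Set EX) (hT : ΓX.IsSpanningTree T)
    (γ : EX → G) (hγT : ∀ e ∈ T, γ e = 1)
    (sf : ∀ z : VX, ι z → G) (invf : ∀ z : VX, ι z → ι z)
    (hinvf : ∀ z i, sf z (invf z i) = (sf z i)⁻¹)
    (hnef : ∀ z i, sf z i ≠ 1)
    (hgen : Subgroup.closure
      ((γ '' {e : EX | e ∉ T}) ∪ ⋃ z : VX, Set.range (sf z)) = ⊤) :
    (gwGraph ΓX o hor γ sf invf hinvf hnef).Connected ∧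
    ActsOn G (gwGraph ΓX o hor γ sf invf hinvf hnef) ∧
    (∀ (g : G) (p : CovV G VX), g • p = p → g = 1) ∧
    (∀ p q : CovV G VX, q ∈ MulAction.orbit G p ↔ p.base = q.base) ∧
    (∀ h h' : CovHE G EX,
      (Sum.inl h' : CovHE G EX ⊕ Σ z : VX, CayE (sf z) (invf z)) ∈
          MulAction.orbit G
            (Sum.inl h : CovHE G EX ⊕ Σ z : VX, CayE (sf z) (invf z)) ↔
        h.edge = h'.edge) := by
  set Y := gwGraph ΓX o hor γ sf invf hinvf hnef
  have sheet (g : G) (a b : VX) : Y.Reach ⟨g, a⟩ ⟨g, b⟩ :=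
    gwGraph_reach_of_reachIn hγT g (hT.1 a b)
  -- Each generator `s` is the monodromy of a loop at `z₀`: along the tree in sheet `1`,
  -- across one edge labelled `s`, and back along the tree in sheet `s`.
  have generator_reach (z₀ : VX) : ∀ s ∈ (γ '' {e | e ∉ T}) ∪ ⋃ z, Set.range (sf z),
      Y.Reach ⟨1, z₀⟩ (s • ⟨1, z₀⟩) := by
    rintro _ (⟨e, -, rfl⟩ | hs)
    · have h : Y.Reach ⟨1, z₀⟩ ⟨1 * γ e, z₀⟩ :=
        ((sheet 1 z₀ _).tail (gwGraph_step_inl 1 e)).trans (sheet _ _ z₀)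
      simpa using h
    · obtain ⟨z, i, rfl⟩ := Set.mem_iUnion.mp hs
      have h : Y.Reach ⟨1, z₀⟩ ⟨1 * sf z i, z₀⟩ :=
        ((sheet 1 z₀ z).tail (gwGraph_step_inr 1 z i)).trans (sheet _ z z₀)
      simpa using h
  refine ⟨fun p q => ?_, gwGraph_actsOn, fun _ _ => CovV.eq_one_of_smul_eq,
    fun _ _ => CovV.mem_orbit_iff, fun _ _ => inl_mem_orbit_inl_iff.trans CovHE.mem_orbit_iff⟩
  exact Multigraph.connected_of_closure_eq_top gwGraph_actsOn hgen ⟨1, p.base⟩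
    (generator_reach p.base) (fun w => ⟨w.g, by simpa using sheet w.g p.base w.base⟩) p q

/-- Let `X` be a finite connected graph with spanning tree `T`,
`γ` an assignment of elements of `G` to the edges of `X` that is trivial on tree
edges, and `S_z` a finite symmetric multiset of nontrivial elements of `G` for
each vertex `z`.  If `G` is generated by the labels `γ` of the non-tree edges
together with `⋃_z S_z`, then the associated graph `Y` (with vertex set
`G × V(X)`, horizontal edges twisted by `γ`, and fiber `Cay(G,S_z)` over `z`) is
connected, the left `G`-action on the first coordinate preserves incidence, has
trivial vertex stabilizers (hence is harmonic and étale), and the quotient is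
isomorphic to `X` (vertex orbits are the fibers of the projection, and orbits of
horizontal edges correspond to the edges of `X`). -/
theorem gw_cover_connected_etale
    [Fintype G] [Fintype VX] [Fintype EX] [∀ z, Fintype (ι z)]
    (ΓX : Multigraph VX EX) (hXconn : ΓX.Connected)
    (o : EX → VX × VX) (hor : ∀ e, ΓX.ends e = s((o e).1, (o e).2))
    (T : Set EX) (hT : ΓX.IsSpanningTree T)
    (γ : EX → G) (hγT : ∀ e ∈ T, γ e = 1)
    (sf : ∀ z : VX, ι z → G) (invf : ∀ z : VX, ι z → ι z)
    (hinvf : ∀ z i, sf z (invf z i) = (sf z i)⁻¹)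
    (hinvf2 : ∀ z i, invf z (invf z i) = i)
    (hnef : ∀ z i, sf z i ≠ 1)
    (hgen : Subgroup.closure
      ((γ '' {e : EX | e ∉ T}) ∪ ⋃ z : VX, Set.range (sf z)) = ⊤) :
    (gwGraph ΓX o hor γ sf invf hinvf hnef).Connected ∧
    ActsOn G (gwGraph ΓX o hor γ sf invf hinvf hnef) ∧
    (∀ (g : G) (p : CovV G VX), g • p = p → g = 1) ∧
    (∀ p q : CovV G VX, q ∈ MulAction.orbit G p ↔ p.base = q.base) ∧
    (∀ h h' : CovHE G EX,
      (Sum.inl h' : CovHE G EX ⊕ Σ z : VX, CayE (sf z) (invf z)) ∈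
          MulAction.orbit G
            (Sum.inl h : CovHE G EX ⊕ Σ z : VX, CayE (sf z) (invf z)) ↔
        h.edge = h'.edge) :=
  gw_cover_connected_etale_general ΓX o hor T hT γ hγT sf invf hinvf hnef hgen

end Stmt19
end
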